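/- arXiv:1005.1586 — 3 statements merged into one kernel-verified Lean document; each statement's English description precedes it below -/
import Mathlib

section
/- For α ≥ 1, the function k ↦ ω_{α,+}(k)/k (phase velocity) with value √(gh₀) at k=0 is continuous and monotonically nonincreasing on [0,∞), and as k → ∞ it tends to √(gh₀)·√((α-1)/α). -/
/-! The phase velocity is `√(gh₀)·√(q((kh₀)²))` for the Möbius ratio `q x = (1 + a x)/(1 + b x)`
with `a = (α-1)/3 ≤ b = α/3`. Since `q x = a/b + (1 - a/b)/(1 + b x)`, `q` decreases on `[0,∞)`
towards `a/b = (α-1)/α`, and `k ↦ (kh₀)²` increases from `0` to `∞`. -/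

open Filter Topology Set

section MobiusRatio

variable {a b : ℝ}

lemma continuousOn_one_add_mul_div_one_add_mul (hb : 0 ≤ b) :
    ContinuousOn (fun x : ℝ => (1 + a * x) / (1 + b * x)) (Ici 0) :=
  ContinuousOn.div (by fun_prop) (by fun_prop) fun x (hx : 0 ≤ x) => by positivity

lemma antitoneOn_one_add_mul_div_one_add_mul (hb : 0 ≤ b) (hab : a ≤ b) :
    AntitoneOn (fun x : ℝ => (1 + a * x) / (1 + b * x)) (Ici 0) := by
  intro x (hx : 0 ≤ x) y (hy : 0 ≤ y) hxy
  rw [div_le_div_iff₀ (by positivity) (by positivity)]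
  nlinarith [mul_nonneg (sub_nonneg.2 hab) (sub_nonneg.2 hxy)]

lemma tendsto_one_add_mul_div_one_add_mul_atTop (hb : 0 < b) :
    Tendsto (fun x : ℝ => (1 + a * x) / (1 + b * x)) atTop (𝓝 (a / b)) := by
  have hden : Tendsto (fun x : ℝ => 1 + b * x) atTop atTop :=
    tendsto_atTop_add_const_left _ _ (tendsto_id.const_mul_atTop hb)
  have htail := ((tendsto_const_nhds (x := 1 - a / b)).div_atTop hden).const_add (a / b)
  rw [add_zero] at htail
  refine htail.congr' ?_
  filter_upwards [eventually_ge_atTop 0] with x (hx : 0 ≤ x)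
  have : 1 + b * x ≠ 0 := by positivity
  field_simp
  ring

end MobiusRatio

theorem stmt_6_general (g h₀ α : ℝ) (hh₀ : 0 < h₀) (hα : 1 ≤ α) :
    let c : ℝ → ℝ := fun k => Real.sqrt (g * h₀) *
      Real.sqrt ((1 + (α - 1) * (k * h₀) ^ 2 / 3) / (1 + α * (k * h₀) ^ 2 / 3))
    c 0 = Real.sqrt (g * h₀) ∧
    ContinuousOn c (Set.Ici 0) ∧
    AntitoneOn c (Set.Ici 0) ∧
    Tendsto c atTop (𝓝 (Real.sqrt (g * h₀) * Real.sqrt ((α - 1) / α))) := by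
  intro c
  set q : ℝ → ℝ := fun x => (1 + (α - 1) / 3 * x) / (1 + α / 3 * x)
  set s : ℝ → ℝ := fun k => (k * h₀) ^ 2
  have hc : c = fun k => √(g * h₀) * √(q (s k)) := by
    funext k
    simp only [c, q, s, div_mul_eq_mul_div]
  have hb : 0 < α / 3 := by positivity
  have hab : (α - 1) / 3 ≤ α / 3 := by linarith
  have hs : MapsTo s (Ici 0) (Ici 0) := fun k _ => mem_Ici.2 (sq_nonneg _)
  have hs_mono : MonotoneOn s (Ici 0) := fun x (hx : 0 ≤ x) y _ hxy =>
    pow_le_pow_left₀ (by positivity) (mul_le_mul_of_nonneg_right hxy hh₀.le) 2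
  have hs_lim : Tendsto s atTop atTop :=
    (tendsto_pow_atTop two_ne_zero).comp (tendsto_id.atTop_mul_const hh₀)
  refine ⟨by simp [c], ?_, ?_, ?_⟩
  · rw [hc]
    exact continuousOn_const.mul (Real.continuous_sqrt.comp_continuousOn
      ((continuousOn_one_add_mul_div_one_add_mul hb.le).comp (by fun_prop) hs))
  · rw [hc]
    have hqs : AntitoneOn (q ∘ s) (Ici 0) :=
      (antitoneOn_one_add_mul_div_one_add_mul hb.le hab).comp_MonotoneOn hs_mono hs
    exact fun x hx y hy hxy =>
      mul_le_mul_of_nonneg_left (Real.sqrt_le_sqrt (hqs hx hy hxy)) (Real.sqrt_nonneg _)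
  · rw [hc, show (α - 1) / α = (α - 1) / 3 / (α / 3) by field_simp]
    exact (((tendsto_one_add_mul_div_one_add_mul_atTop hb).comp hs_lim).sqrt).const_mul _

/-- For `α ≥ 1`, the phase velocity
`c(k) = √(gh₀)·√((1+(α-1)(kh₀)²/3)/(1+α(kh₀)²/3))` satisfies `c(0) = √(gh₀)`, is
continuous and monotonically nonincreasing on `[0,∞)`, and tends to
`√(gh₀)·√((α-1)/α)` as `k → ∞`. -/
theorem stmt_6 (g h₀ α : ℝ) (hg : 0 < g) (hh₀ : 0 < h₀) (hα : 1 ≤ α) :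
    let c : ℝ → ℝ := fun k => Real.sqrt (g * h₀) *
      Real.sqrt ((1 + (α - 1) * (k * h₀) ^ 2 / 3) / (1 + α * (k * h₀) ^ 2 / 3))
    c 0 = Real.sqrt (g * h₀) ∧
    ContinuousOn c (Set.Ici 0) ∧
    AntitoneOn c (Set.Ici 0) ∧
    Tendsto c atTop (𝓝 (Real.sqrt (g * h₀) * Real.sqrt ((α - 1) / α))) :=
  stmt_6_general g h₀ α hh₀ hα
end

section
/- The nodal-to-average reconstruction formula is exact to fourth order: if w : ℝ → ℝ is C⁴ and w̄ᵢ = (1/δ)∫_{x_{i-1}}^{x_i} w with x_j = jδ, then w̄ᵢ - (-(1/24)w(x_{i-2}) + (13/24)w(x_{i-1}) + (13/24)w(x_i) - (1/24)w(x_{i+1})) = O(δ⁴). -/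
/-!
The reconstruction is exact on cubic polynomials, as a direct computation of the cell average
shows, and the error functional is linear. Subtracting from `w` its cubic Taylor polynomial at
`x_{i-2}` therefore leaves the error unchanged, while the Lagrange remainder is `O(M δ⁴)` on the
whole stencil `[x_{i-2}, x_{i+1}]`; the error functional is bounded by `13/6` times the sup norm.
-/

open intervalIntegral Set Nat

/-- With `a = x_{i-2}`: the cell average over `[x_{i-1}, x_i]` minus its reconstruction from the
nodal values at `x_{i-2}, …, x_{i+1}`. -/
noncomputable def nodalAverageError (f : ℝ → ℝ) (a δ : ℝ) : ℝ :=
  (1 / δ) * (∫ s in (a + δ)..(a + 2 * δ), f s)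
    - (-(1 / 24) * f a + (13 / 24) * f (a + δ) + (13 / 24) * f (a + 2 * δ)
        - (1 / 24) * f (a + 3 * δ))

theorem nodalAverageError_sub {f g : ℝ → ℝ} {a δ : ℝ}
    (hf : IntervalIntegrable f MeasureTheory.volume (a + δ) (a + 2 * δ))
    (hg : IntervalIntegrable g MeasureTheory.volume (a + δ) (a + 2 * δ)) :
    nodalAverageError (f - g) a δ = nodalAverageError f a δ - nodalAverageError g a δ := by
  simp only [nodalAverageError, Pi.sub_apply, integral_sub hf hg]
  ring

theorem nodalAverageError_cubic (c : ℕ → ℝ) (a : ℝ) {δ : ℝ} (hδ : δ ≠ 0) :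
    nodalAverageError (fun x ↦ ∑ k ∈ Finset.range 4, c k * (x - a) ^ k) a δ = 0 := by
  have hint : ∫ s in (a + δ)..(a + 2 * δ), ∑ k ∈ Finset.range 4, c k * (s - a) ^ k
      = ∑ k ∈ Finset.range 4, c k * (((2 * δ) ^ (k + 1) - δ ^ (k + 1)) / (k + 1)) := by
    rw [integral_finsetSum fun k _ ↦ (by fun_prop : Continuous _).intervalIntegrable _ _]
    refine Finset.sum_congr rfl fun k _ ↦ ?_
    rw [integral_const_mul, integral_comp_sub_right (fun s ↦ s ^ k), integral_pow]
    ring_nf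
  rw [nodalAverageError, hint]
  simp only [Finset.sum_range_succ, Finset.sum_range_zero]
  field_simp
  ring

theorem abs_nodalAverageError_le {g : ℝ → ℝ} {a δ K : ℝ} (hδ : 0 < δ)
    (hK : ∀ x ∈ Icc a (a + 3 * δ), |g x| ≤ K) :
    |nodalAverageError g a δ| ≤ 13 / 6 * K := by
  have hint : |∫ s in (a + δ)..(a + 2 * δ), g s| ≤ K * δ := by
    have := norm_integral_le_of_norm_le_const (a := a + δ) (b := a + 2 * δ) (C := K) (f := g)
      fun x hx ↦ by
        rw [uIoc_of_le (by linarith)] at hx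
        exact hK x ⟨by linarith [hx.1], by linarith [hx.2]⟩
    rwa [Real.norm_eq_abs, show a + 2 * δ - (a + δ) = δ by ring, abs_of_pos hδ] at this
  have h0 := hK a ⟨le_rfl, by linarith⟩
  have h1 := hK (a + δ) ⟨by linarith, by linarith⟩
  have h2 := hK (a + 2 * δ) ⟨by linarith, by linarith⟩
  have h3 := hK (a + 3 * δ) ⟨by linarith, le_rfl⟩
  have havg : |(1 / δ) * ∫ s in (a + δ)..(a + 2 * δ), g s| ≤ K := by
    rw [abs_mul, abs_of_pos (one_div_pos.mpr hδ), one_div_mul_eq_div, div_le_iff₀ hδ]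
    exact hint
  rw [abs_le] at h0 h1 h2 h3 havg ⊢
  unfold nodalAverageError
  constructor <;> linarith [h0.1, h0.2, h1.1, h1.2, h2.1, h2.2, h3.1, h3.2, havg.1, havg.2]

theorem abs_sub_taylorWithinEval_le {f : ℝ → ℝ} {n : ℕ} {a b M x : ℝ}
    (hf : ContDiff ℝ (n + 1) f) (hab : a < b)
    (hM : ∀ y ∈ Icc a b, |iteratedDeriv (n + 1) f y| ≤ M) (hx : x ∈ Icc a b) :
    |f x - taylorWithinEval f n (Icc a b) a x| ≤ M * (b - a) ^ (n + 1) / n ! := by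
  have hM0 : 0 ≤ M := (abs_nonneg _).trans (hM a ⟨le_rfl, hab.le⟩)
  have hbd := taylor_mean_remainder_bound hab.le hf.contDiffOn hx fun y hy ↦ by
    rw [iteratedDerivWithin_eq_iteratedDeriv (uniqueDiffOn_Icc hab) hf.contDiffAt hy]
    exact hM y hy
  refine hbd.trans ?_
  gcongr
  · linarith [hx.1]
  · exact hx.2

theorem taylorWithinEval_eq_sum (f : ℝ → ℝ) (n : ℕ) (s : Set ℝ) (a x : ℝ) :
    taylorWithinEval f n s a x
      = ∑ k ∈ Finset.range (n + 1), iteratedDerivWithin k f s a / k ! * (x - a) ^ k := by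
  rw [taylor_within_apply]
  refine Finset.sum_congr rfl fun k _ ↦ ?_
  rw [smul_eq_mul]
  ring

/-- Fourth-order accuracy of the nodal-to-average reconstruction:
`w̄ᵢ - (-(1/24)w(x_{i-2}) + (13/24)w(x_{i-1}) + (13/24)w(x_i) - (1/24)w(x_{i+1}))`
is bounded by `C·M·δ⁴` for an absolute constant `C`. -/
theorem stmt_14 :
    ∃ C : ℝ, 0 < C ∧ ∀ (w : ℝ → ℝ) (M δ : ℝ) (i : ℤ),
      ContDiff ℝ 4 w → 0 < δ →
      (∀ y ∈ Set.Icc (((i : ℝ) - 2) * δ) (((i : ℝ) + 1) * δ), |iteratedDeriv 4 w y| ≤ M) →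
      |(1 / δ) * (∫ s in (((i : ℝ) - 1) * δ)..((i : ℝ) * δ), w s)
        - (-(1 / 24) * w (((i : ℝ) - 2) * δ) + (13 / 24) * w (((i : ℝ) - 1) * δ)
            + (13 / 24) * w ((i : ℝ) * δ) - (1 / 24) * w (((i : ℝ) + 1) * δ))|
      ≤ C * M * δ ^ 4 := by
  refine ⟨117 / 4, by norm_num, fun w M δ i hw hδ hM ↦ ?_⟩
  set a : ℝ := ((i : ℝ) - 2) * δ
  have h1 : ((i : ℝ) - 1) * δ = a + δ := by ring
  have h2 : (i : ℝ) * δ = a + 2 * δ := by ring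
  have h3 : ((i : ℝ) + 1) * δ = a + 3 * δ := by ring
  rw [h3] at hM
  rw [h1, h2, h3]
  change |nodalAverageError w a δ| ≤ _
  set T : ℝ → ℝ := taylorWithinEval w 3 (Icc a (a + 3 * δ)) a
  have hT : T = fun x ↦ ∑ k ∈ Finset.range 4,
      iteratedDerivWithin k w (Icc a (a + 3 * δ)) a / k ! * (x - a) ^ k :=
    funext (taylorWithinEval_eq_sum w 3 _ a)
  have hTc : Continuous T := by rw [hT]; fun_prop
  have hrem : ∀ x ∈ Icc a (a + 3 * δ), |(w - T) x| ≤ M * (3 * δ) ^ 4 / 3 ! := fun x hx ↦ by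
    have := abs_sub_taylorWithinEval_le (n := 3) hw (by linarith) hM hx
    rwa [add_sub_cancel_left] at this
  calc |nodalAverageError w a δ|
      = |nodalAverageError (w - T) a δ| := by
        rw [nodalAverageError_sub (hw.continuous.intervalIntegrable _ _) (hTc.intervalIntegrable _ _),
          hT, nodalAverageError_cubic _ a hδ.ne', sub_zero]
    _ ≤ 13 / 6 * (M * (3 * δ) ^ 4 / 3 !) := abs_nodalAverageError_le hδ hrem
    _ = 117 / 4 * M * δ ^ 4 := by simp only [factorial]; push_cast; ring
end

section
/- Let S₁(δ) be the 2×2 complex matrix [[α₁(δ), α₂(δ)ik],[gh₀α₂(δ)ik, α₁(δ)]] with α₁, α₂ as in the RK4 discretization of the linearized shallow water system, and S₂(δ) = [[1,0],[gh₀γikδ,1]]. Then the trace of M(δ) := (S₁(δ/2) S₂(δ) S₁(δ/2) - I)/δ satisfies tr M(δ) = -g h₀ (1+γ) k² δ + O(δ³) as δ → 0. -/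
/-!
With `S₂ = [[1, 0], [e, 1]]`, cyclicity of the trace gives
`tr (S₁ S₂ S₁) = tr (S₁² S₂) = tr (S₁²) + e (S₁²)₀₁`, which for `S₁ = [[a, b], [c, a]]` is
`2 (a² + b c) + 2 a b e`. Here `a = α₁(δ/2)` is even in `δ` while `b`, `c` and `e` are odd, so
this is an even polynomial in `δ`; hence `tr M(δ)` is odd, its linear coefficient is
`-g h₀ (1 + γ) k²`, and the remainder is `δ³` times an even polynomial.
-/

open Complex Matrix Filter Topology Asymptotics

theorem Matrix.trace_fin_two_mul_shear_mul {R : Type*} [CommRing R] (a b c e : R) :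
    trace (!![a, b; c, a] * !![1, 0; e, 1] * !![a, b; c, a]) =
      2 * (a ^ 2 + b * c) + 2 * a * b * e := by
  rw [mul_fin_two, mul_fin_two, trace_fin_two_of]
  ring

theorem Asymptotics.isBigO_pow_of_eventuallyEq_pow_mul {l : Filter ℝ} (hl : l ≤ 𝓝 0) {n : ℕ}
    {f C : ℝ → ℂ} (hC : ContinuousAt C 0) (hf : f =ᶠ[l] fun δ => (δ : ℂ) ^ n * C δ) :
    f =O[l] fun δ => δ ^ n := by
  have hpow : (fun δ : ℝ => (δ : ℂ) ^ n) =O[l] fun δ => δ ^ n :=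
    isBigO_of_le _ fun δ => by simp
  simpa using (hpow.mul ((hC.isBigO_one ℝ).mono hl)).congr' hf.symm EventuallyEq.rfl

theorem stmt_19_general (k g h₀ γ : ℝ) :
    let α₁ : ℝ → ℂ := fun δ =>
      ((1 + δ ^ 2 / 2 * (-(g * h₀ * k ^ 2)) + δ ^ 4 / 24 * (g * h₀ * k ^ 2) ^ 2 : ℝ) : ℂ)
    let α₂ : ℝ → ℂ := fun δ => ((δ + δ ^ 3 / 6 * (-(g * h₀ * k ^ 2)) : ℝ) : ℂ)
    let S₁ : ℝ → Matrix (Fin 2) (Fin 2) ℂ := fun δ =>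
      !![α₁ δ, α₂ δ * (Complex.I * k); (g : ℂ) * h₀ * α₂ δ * (Complex.I * k), α₁ δ]
    let S₂ : ℝ → Matrix (Fin 2) (Fin 2) ℂ := fun δ =>
      !![1, 0; (g : ℂ) * h₀ * γ * Complex.I * k * δ, 1]
    let M : ℝ → Matrix (Fin 2) (Fin 2) ℂ := fun δ =>
      ((δ : ℂ)⁻¹) • (S₁ (δ / 2) * S₂ δ * S₁ (δ / 2) - 1)
    (fun δ : ℝ => Matrix.trace (M δ) - ((-(g * h₀ * (1 + γ) * k ^ 2 * δ) : ℝ) : ℂ))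
      =O[𝓝[≠] (0 : ℝ)] fun δ : ℝ => δ ^ 3 := by
  intro α₁ α₂ S₁ S₂ M
  set A : ℂ := (g : ℂ) * h₀ * k ^ 2
  refine isBigO_pow_of_eventuallyEq_pow_mul nhdsWithin_le_nhds
    (C := fun δ => A ^ 2 * (1 / 12 + γ / 6) - δ ^ 2 * A ^ 3 * (5 / 2304 + γ / 128)
      + δ ^ 4 * A ^ 4 * (1 / 73728 + γ / 9216)) (by fun_prop) ?_
  filter_upwards [self_mem_nhdsWithin] with δ (hδ : δ ≠ 0)
  simp only [M, S₁, S₂, trace_smul, trace_sub, trace_one, Fintype.card_fin,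
    trace_fin_two_mul_shear_mul, smul_eq_mul, α₁, α₂, A]
  have hδ' : (δ : ℂ) ≠ 0 := ofReal_ne_zero.mpr hδ
  push_cast
  field_simp
  ring_nf
  rw [I_sq]
  ring

/-- With `S₁(δ)` the RK4 amplification matrix of the linearized shallow water system and
`S₂(δ) = [[1,0],[gh₀γikδ,1]]`, the trace of `M(δ) = (S₁(δ/2)S₂(δ)S₁(δ/2) - I)/δ`
satisfies `tr M(δ) = -g h₀ (1+γ) k² δ + O(δ³)` as `δ → 0`. -/
theorem stmt_19 (k g h₀ γ : ℝ) (hg : 0 < g) (hh₀ : 0 < h₀) :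
    let α₁ : ℝ → ℂ := fun δ =>
      ((1 + δ ^ 2 / 2 * (-(g * h₀ * k ^ 2)) + δ ^ 4 / 24 * (g * h₀ * k ^ 2) ^ 2 : ℝ) : ℂ)
    let α₂ : ℝ → ℂ := fun δ => ((δ + δ ^ 3 / 6 * (-(g * h₀ * k ^ 2)) : ℝ) : ℂ)
    let S₁ : ℝ → Matrix (Fin 2) (Fin 2) ℂ := fun δ =>
      !![α₁ δ, α₂ δ * (Complex.I * k); (g : ℂ) * h₀ * α₂ δ * (Complex.I * k), α₁ δ]
    let S₂ : ℝ → Matrix (Fin 2) (Fin 2) ℂ := fun δ =>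
      !![1, 0; (g : ℂ) * h₀ * γ * Complex.I * k * δ, 1]
    let M : ℝ → Matrix (Fin 2) (Fin 2) ℂ := fun δ =>
      ((δ : ℂ)⁻¹) • (S₁ (δ / 2) * S₂ δ * S₁ (δ / 2) - 1)
    (fun δ : ℝ => Matrix.trace (M δ) - ((-(g * h₀ * (1 + γ) * k ^ 2 * δ) : ℝ) : ℂ))
      =O[𝓝[≠] (0 : ℝ)] fun δ : ℝ => δ ^ 3 :=
  stmt_19_general k g h₀ γ
end
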